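/- Let N and M be nonempty finite sets, let u : N × M → ℝ, and let p be a natural number with 1 ≤ p ≤ |M|. Then the optimal value of the max-min model — the maximum, over z : M → {0,1} with ∑_{j ∈ M} z(j) = p, over y : N × M → ℝ with y(i,j) ≥ 0, ∑_{j ∈ M} y(i,j) = 1 for each i, and y(i,j) ≤ z(j) for all i,j, and over α ∈ ℝ with α ≤ ∑_{j ∈ M} u(i,j) · y(i,j) for every i ∈ N, of α — equals max over subsets S ⊆ M with |S| = p of min_{i ∈ N} max_{j ∈ S} u(i,j). -/

import Mathlib

open Finset

/-!
A feasible `z` is the indicator of a set `S` of `p` open stations, and every customer's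
assignment `y i` is then a probability vector supported on `S`, so `∑ j, u i j * y i j` is at
most `max_{j ∈ S} u i j`. Conversely, assigning every customer to a best open station of `S`
attains `min_i max_{j ∈ S} u i j`. Hence both problems have the same (finite, hence attained)
maximum.
-/

section MaxMin

variable {N M : Type*} [Fintype N] [Fintype M]

/-- `(z, y, α)` is a feasible point of the paper's Model (2). -/
def MaxMinFeasible (u : N → M → ℝ) (p : ℕ) (z : M → ℝ) (y : N → M → ℝ) (α : ℝ) : Prop :=
  (∀ j, z j = 0 ∨ z j = 1) ∧
  (∑ j, z j = (p : ℝ)) ∧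
  (∀ i j, 0 ≤ y i j) ∧
  (∀ i, ∑ j, y i j = 1) ∧
  (∀ i j, y i j ≤ z j) ∧
  (∀ i, α ≤ ∑ j, u i j * y i j)

noncomputable def minMaxUtility [Nonempty N] (u : N → M → ℝ) (S : Finset M)
    (hS : S.Nonempty) : ℝ :=
  univ.inf' univ_nonempty fun i => S.sup' hS (u i)

theorem sum_mul_le_sup'_of_forall_notMem_eq_zero {S : Finset M} (hS : S.Nonempty)
    (f y : M → ℝ) (hy0 : ∀ j, 0 ≤ y j) (hyS : ∀ j ∉ S, y j = 0) (hy1 : ∑ j, y j = 1) :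
    ∑ j, f j * y j ≤ S.sup' hS f :=
  calc ∑ j, f j * y j ≤ ∑ j, S.sup' hS f * y j := sum_le_sum fun j _ => by
        by_cases hj : j ∈ S
        · exact mul_le_mul_of_nonneg_right (le_sup' f hj) (hy0 j)
        · simp [hyS j hj]
    _ = S.sup' hS f := by rw [← mul_sum, hy1, mul_one]

theorem sum_eq_card_filter_of_forall_eq_zero_or_eq_one {z : M → ℝ}
    (hz : ∀ j, z j = 0 ∨ z j = 1) : ∑ j, z j = #{j | z j = 1} := by
  rw [← sum_boole]
  refine sum_congr rfl fun j _ => ?_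
  rcases hz j with h | h <;> simp [h]

theorem exists_card_eq_le_minMaxUtility_of_maxMinFeasible [Nonempty N] {u : N → M → ℝ}
    {p : ℕ} (hp : 1 ≤ p) {z : M → ℝ} {y : N → M → ℝ} {α : ℝ}
    (h : MaxMinFeasible u p z y α) :
    ∃ S : Finset M, #S = p ∧ ∃ hS : S.Nonempty, α ≤ minMaxUtility u S hS := by
  obtain ⟨hz, hzp, hy0, hy1, hyz, hα⟩ := h
  set S : Finset M := {j | z j = 1}
  have hScard : #S = p := by
    exact_mod_cast (sum_eq_card_filter_of_forall_eq_zero_or_eq_one hz).symm.trans hzp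
  have hSne : S.Nonempty := card_pos.mp (by omega)
  have hyS : ∀ i, ∀ j ∉ S, y i j = 0 := fun i j hj => by
    have hzj : z j = 0 := (hz j).resolve_right (by simpa [S] using hj)
    exact le_antisymm (hzj ▸ hyz i j) (hy0 i j)
  refine ⟨S, hScard, hSne, le_inf' _ _ fun i _ => (hα i).trans ?_⟩
  exact sum_mul_le_sup'_of_forall_notMem_eq_zero hSne (u i) (y i) (hy0 i) (hyS i) (hy1 i)

theorem maxMinFeasible_minMaxUtility [Nonempty N] (u : N → M → ℝ) {S : Finset M}
    (hS : S.Nonempty) :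
    ∃ z y, MaxMinFeasible u #S z y (minMaxUtility u S hS) := by
  classical
  choose best hbestS hbest using fun i => exists_mem_eq_sup' hS (u i)
  refine ⟨fun j => if j ∈ S then 1 else 0, fun i => Pi.single (best i) 1,
    fun j => ?_, ?_, fun i j => ?_, fun i => ?_, fun i j => ?_, fun i => ?_⟩
  · by_cases hj : j ∈ S <;> simp [hj]
  · simp
  · by_cases hj : j = best i <;> simp [hj]
  · simp
  · by_cases hj : j = best i
    · subst hj; simp [hbestS i]
    · simp only [Pi.single_apply, hj, if_false]
      split_ifs <;> norm_num
  · simp only [Pi.single_apply, mul_ite, mul_one, mul_zero, sum_ite_eq', mem_univ, if_true]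
    exact hbest i ▸ inf'_le _ (mem_univ i)

theorem exists_isGreatest_minMaxUtility [Nonempty N] (u : N → M → ℝ) {p : ℕ} (hp : 1 ≤ p)
    (hpM : p ≤ Fintype.card M) :
    ∃ V, IsGreatest {v | ∃ S : Finset M, #S = p ∧ ∃ hS : S.Nonempty,
      v = minMaxUtility u S hS} V := by
  classical
  set T := {v | ∃ S : Finset M, #S = p ∧ ∃ hS : S.Nonempty, v = minMaxUtility u S hS}
  have hT : T.Finite := (Set.finite_range fun S : Finset M =>
      if hS : S.Nonempty then minMaxUtility u S hS else 0).subset <| by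
    rintro v ⟨S, -, hS, rfl⟩
    exact ⟨S, dif_pos hS⟩
  obtain ⟨S, -, hScard⟩ := exists_subset_card_eq (s := (univ : Finset M)) (by simpa using hpM)
  have hTne : T.Nonempty :=
    ⟨_, S, hScard, card_pos.mp (by omega), rfl⟩
  exact ⟨sSup T, hTne.csSup_mem hT, fun _ hv => le_csSup hT.bddAbove hv⟩

end MaxMin

theorem maxmin_optimal_value_eq_subset_max_general
    {N M : Type} [Fintype N] [Fintype M] [Nonempty N]
    (u : N → M → ℝ) (p : ℕ) (hp1 : 1 ≤ p) (hpM : p ≤ Fintype.card M) :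
    ∃ V : ℝ,
      IsGreatest
        {α : ℝ | ∃ (z : M → ℝ) (y : N → M → ℝ),
          (∀ j, z j = 0 ∨ z j = 1) ∧
          (∑ j, z j = (p : ℝ)) ∧
          (∀ i j, 0 ≤ y i j) ∧
          (∀ i, ∑ j, y i j = 1) ∧
          (∀ i j, y i j ≤ z j) ∧
          (∀ i, α ≤ ∑ j, u i j * y i j)} V ∧
      IsGreatest
        {v : ℝ | ∃ S : Finset M, S.card = p ∧
          ∃ hS : S.Nonempty,
            v = Finset.univ.inf' Finset.univ_nonempty
                  (fun i : N => S.sup' hS (u i))} V := by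
  obtain ⟨V, hV⟩ := exists_isGreatest_minMaxUtility u hp1 hpM
  obtain ⟨S, hScard, hS, rfl⟩ := hV.1
  refine ⟨_, ⟨?_, ?_⟩, hV⟩
  · exact hScard ▸ maxMinFeasible_minMaxUtility u hS
  · rintro α ⟨z, y, hfeas⟩
    obtain ⟨S', hS'card, hS', hα⟩ :=
      exists_card_eq_le_minMaxUtility_of_maxMinFeasible hp1 hfeas
    exact hα.trans (hV.2 ⟨S', hS'card, hS', rfl⟩)

/-- The optimal value of the max-min model — maximizing the auxiliary variable
`α` over binary station-opening variables `z` with `∑ j, z j = p`, fractional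
assignments `y` with `y i j ≥ 0`, `∑ j, y i j = 1` for each customer `i`, and
`y i j ≤ z j`, and `α ≤ ∑ j, u i j * y i j` for every customer `i` — equals the
maximum over subsets `S ⊆ M` of cardinality `p` of
`min_{i ∈ N} max_{j ∈ S} u i j`. -/
theorem maxmin_optimal_value_eq_subset_max
    {N M : Type} [Fintype N] [Fintype M] [Nonempty N] [Nonempty M]
    (u : N → M → ℝ) (p : ℕ) (hp1 : 1 ≤ p) (hpM : p ≤ Fintype.card M) :
    ∃ V : ℝ,
      IsGreatest
        {α : ℝ | ∃ (z : M → ℝ) (y : N → M → ℝ),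
          (∀ j, z j = 0 ∨ z j = 1) ∧
          (∑ j, z j = (p : ℝ)) ∧
          (∀ i j, 0 ≤ y i j) ∧
          (∀ i, ∑ j, y i j = 1) ∧
          (∀ i j, y i j ≤ z j) ∧
          (∀ i, α ≤ ∑ j, u i j * y i j)} V ∧
      IsGreatest
        {v : ℝ | ∃ S : Finset M, S.card = p ∧
          ∃ hS : S.Nonempty,
            v = Finset.univ.inf' Finset.univ_nonempty
                  (fun i : N => S.sup' hS (u i))} V :=
  maxmin_optimal_value_eq_subset_max_general u p hp1 hpM
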